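/- arXiv:1902.09273 — 2 statements merged into one kernel-verified Lean document; each statement's English description precedes it below -/
import Mathlib

section
/- The metric measure space (V, d, μ) on the weighted homogeneous tree is not doubling: for any fixed x₀, the ratio μ(B_{2r}(x₀))/μ(B_r(x₀)) tends to infinity as r → ∞; in fact μ(B_{2r}(x₀))/μ(B_r(x₀)) ≥ q^r for all r ≥ 1. -/
open scoped ENNReal NNReal
open MeasureTheory Filter

/-- An infinite homogeneous tree of order `q+1`: a connected acyclic graph in which
every vertex has exactly `q+1` neighbours, equipped with a doubly-infinite geodesic
`geo : ℤ → V` (the labelling `N` is the inverse of `geo`) and the associated level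
function `lev`, satisfying `lev (geo i) = i`, changing by `±1` along edges, and such
that every vertex has exactly one neighbour lying directly above it. -/
structure HomTree (q : ℕ) where
  V : Type
  G : SimpleGraph V
  conn : G.Connected
  acyclic : G.IsAcyclic
  degree : ∀ v : V, (G.neighborSet v).ncard = q + 1
  lev : V → ℤ
  geo : ℤ → V
  geo_dist : ∀ i j : ℤ, G.dist (geo i) (geo j) = (i - j).natAbs
  lev_geo : ∀ i : ℤ, lev (geo i) = i
  lev_adj : ∀ v w : V, G.Adj v w → lev w = lev v + 1 ∨ lev w = lev v - 1
  unique_above : ∀ v : V, ∃! w : V, G.Adj v w ∧ lev w = lev v + 1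

namespace HomTree

variable {q : ℕ}

/-- Graph distance on the tree. -/
noncomputable def dist (T : HomTree q) (x y : T.V) : ℕ := T.G.dist x y

/-- `x` lies below `y`. -/
def below (T : HomTree q) (x y : T.V) : Prop := T.lev x = T.lev y - T.dist x y

/-- The weighted measure `μ(A) = ∑_{x ∈ A} q^{ℓ(x)}`. -/
noncomputable def mu (T : HomTree q) (A : Set T.V) : ℝ≥0∞ :=
  ∑' x : A, (q : ℝ≥0∞) ^ (T.lev x.1)

def sphere (T : HomTree q) (x₀ : T.V) (r : ℕ) : Set T.V := {x | T.dist x x₀ = r}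

def ball (T : HomTree q) (x₀ : T.V) (r : ℕ) : Set T.V := {x | T.dist x x₀ ≤ r}

/-- An admissible trapezoid: either a degenerate singleton `{root}` (with height 1), or
the set of vertices below the root spanning levels `[h, 2h)` under it. -/
structure Trapezoid (T : HomTree q) where
  root : T.V
  height : ℕ
  degenerate : Bool
  height_pos : 1 ≤ height
  deg_height : degenerate = true → height = 1

namespace Trapezoid

variable {T : HomTree q}

/-- The vertex set of the admissible trapezoid. -/
def set (R : T.Trapezoid) : Set T.V :=
  if R.degenerate then {R.root}
  else {x | T.below x R.root ∧ (R.height : ℤ) ≤ T.lev R.root - T.lev x ∧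
        T.lev R.root - T.lev x < 2 * (R.height : ℤ)}

/-- The envelope (Calderón–Zygmund set) of the admissible trapezoid:
vertices below the root with `h/2 ≤ ℓ(x_R) - ℓ(x) < 4h`. -/
def envelope (R : T.Trapezoid) : Set T.V :=
  if R.degenerate then {R.root}
  else {x | T.below x R.root ∧ (R.height : ℤ) ≤ 2 * (T.lev R.root - T.lev x) ∧
        T.lev R.root - T.lev x < 4 * (R.height : ℤ)}

/-- The width `w(R) = q^{ℓ(x_R)}`. -/
noncomputable def width (R : T.Trapezoid) : ℝ≥0∞ := (q : ℝ≥0∞) ^ (T.lev R.root)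

/-- The dilated set `R̃* = {x : d(x, R̃) < h(R̃)/4}`. -/
def dilate (R : T.Trapezoid) : Set T.V :=
  {x | ∃ y ∈ R.envelope, 4 * T.dist x y < R.height}

end Trapezoid

/-- `‖f‖_{L^p(μ)}^p = ∑_x |f(x)|^p q^{ℓ(x)}`. -/
noncomputable def lpPow (T : HomTree q) (f : T.V → ℂ) (p : ℝ) : ℝ≥0∞ :=
  ∑' x : T.V, (‖f x‖₊ : ℝ≥0∞) ^ p * (q : ℝ≥0∞) ^ (T.lev x)

/-- `∫_A |f|^p dμ`. -/
noncomputable def setIntPow (T : HomTree q) (f : T.V → ℂ) (p : ℝ) (A : Set T.V) : ℝ≥0∞ :=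
  ∑' x : A, (‖f x.1‖₊ : ℝ≥0∞) ^ p * (q : ℝ≥0∞) ^ (T.lev x.1)

/-- `‖f‖_{L¹(μ)}`. -/
noncomputable def l1Norm (T : HomTree q) (f : T.V → ℂ) : ℝ≥0∞ :=
  ∑' x : T.V, (‖f x‖₊ : ℝ≥0∞) * (q : ℝ≥0∞) ^ (T.lev x)

/-- `‖f‖_{L²(μ)}`. -/
noncomputable def l2Norm (T : HomTree q) (f : T.V → ℂ) : ℝ≥0∞ :=
  (T.lpPow f 2) ^ (2⁻¹ : ℝ)

/-- `‖f‖_{L^{p}(μ)}` for `p ∈ ℝ≥0∞`, including `p = ∞`. -/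
noncomputable def lpNormE (T : HomTree q) (p : ℝ≥0∞) (f : T.V → ℂ) : ℝ≥0∞ :=
  if p = ⊤ then ⨆ x, (‖f x‖₊ : ℝ≥0∞) else (T.lpPow f p.toReal) ^ (p.toReal)⁻¹

/-- The trapezoidal maximal function of a nonnegative density `g`. -/
noncomputable def maxFn (T : HomTree q) (g : T.V → ℝ≥0∞) (x : T.V) : ℝ≥0∞ :=
  ⨆ (R : T.Trapezoid) (_ : x ∈ R.set),
    (∑' y : R.set, g y.1 * (q : ℝ≥0∞) ^ (T.lev y.1)) / T.mu R.set

/-- `a` is a `(1,∞)`-atom associated with the Calderón–Zygmund set `R̃`. -/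
def IsInftyAtomOn (T : HomTree q) (R : T.Trapezoid) (a : T.V → ℂ) : Prop :=
  Function.support a ⊆ R.envelope ∧
  (∀ x, (‖a x‖₊ : ℝ≥0∞) ≤ (T.mu R.envelope)⁻¹) ∧
  ∑' x : T.V, a x * (q : ℂ) ^ (T.lev x) = 0

/-- `a` is a `(1,∞)`-atom. -/
def IsInftyAtom (T : HomTree q) (a : T.V → ℂ) : Prop :=
  ∃ R : T.Trapezoid, T.IsInftyAtomOn R a

/-- `a` is a `(1,p)`-atom, `1 < p < ∞`: supported in a Calderón–Zygmund set `R̃`,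
`‖a‖_{L^p} ≤ μ(R̃)^{1/p-1}` (equivalently `‖a‖_{L^p}^p ≤ μ(R̃)^{1-p}`), vanishing integral. -/
def IspAtom (T : HomTree q) (p : ℝ) (a : T.V → ℂ) : Prop :=
  ∃ R : T.Trapezoid, Function.support a ⊆ R.envelope ∧
    T.lpPow a p ≤ (T.mu R.envelope) ^ (1 - p) ∧
    ∑' x : T.V, a x * (q : ℂ) ^ (T.lev x) = 0

/-- `h` belongs to the atomic Hardy space `H^{1,∞}(μ)`. -/
def InH1 (T : HomTree q) (h : T.V → ℂ) : Prop :=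
  ∃ (c : ℕ → ℂ) (a : ℕ → T.V → ℂ), (∀ n, T.IsInftyAtom (a n)) ∧
    Summable (fun n => ‖c n‖) ∧ ∀ x, HasSum (fun n => c n * a n x) (h x)

/-- The `H^{1,∞}(μ)` norm: infimum of `∑ |λ_j|` over atomic decompositions. -/
noncomputable def H1Norm (T : HomTree q) (h : T.V → ℂ) : ℝ≥0∞ :=
  ⨅ (c : ℕ → ℂ) (a : ℕ → T.V → ℂ)
    (_ : (∀ n, T.IsInftyAtom (a n)) ∧ ∀ x, HasSum (fun n => c n * a n x) (h x)),
    ∑' n, (‖c n‖₊ : ℝ≥0∞)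

/-- `h` belongs to the atomic Hardy space `H^{1,p}(μ)`. -/
def InH1p (T : HomTree q) (p : ℝ) (h : T.V → ℂ) : Prop :=
  ∃ (c : ℕ → ℂ) (a : ℕ → T.V → ℂ), (∀ n, T.IspAtom p (a n)) ∧
    Summable (fun n => ‖c n‖) ∧ ∀ x, HasSum (fun n => c n * a n x) (h x)

/-- The `H^{1,p}(μ)` norm. -/
noncomputable def H1pNorm (T : HomTree q) (p : ℝ) (h : T.V → ℂ) : ℝ≥0∞ :=
  ⨅ (c : ℕ → ℂ) (a : ℕ → T.V → ℂ)
    (_ : (∀ n, T.IspAtom p (a n)) ∧ ∀ x, HasSum (fun n => c n * a n x) (h x)),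
    ∑' n, (‖c n‖₊ : ℝ≥0∞)

/-- The K-functional for the couple `(H¹(μ), L^{p₁}(μ))`. -/
noncomputable def KH1Lp (T : HomTree q) (p₁ : ℝ≥0∞) (t : ℝ≥0∞) (f : T.V → ℂ) : ℝ≥0∞ :=
  ⨅ (b : T.V → ℂ) (g : T.V → ℂ) (_ : ∀ x, f x = b x + g x),
    T.H1Norm b + t * T.lpNormE p₁ g

/-- The real interpolation norm `‖f‖_{θ,pr}` for the couple `(H¹(μ), L^{p₁}(μ))`. -/
noncomputable def interpNorm (T : HomTree q) (p₁ : ℝ≥0∞) (θ pr : ℝ) (f : T.V → ℂ) : ℝ≥0∞ :=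
  (∫⁻ t in Set.Ioi (0 : ℝ),
      (T.KH1Lp p₁ (ENNReal.ofReal t) f / (ENNReal.ofReal t) ^ θ) ^ pr *
        (ENNReal.ofReal t)⁻¹) ^ (1 / pr)

/-- The distinguished Laplacian `ℒ`. -/
noncomputable def lap (T : HomTree q) (f : T.V → ℂ) (x : T.V) : ℂ :=
  f x - (1 / (2 * ((Real.sqrt q : ℝ) : ℂ))) *
    ∑' y : T.G.neighborSet x, ((Real.sqrt q : ℝ) : ℂ) ^ (T.lev y.1 - T.lev x) * f y.1

end HomTree

open HomTree

namespace HomTree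

variable {q : ℕ}

/-- The parent (unique neighbour above). -/
noncomputable def up (T : HomTree q) (x : T.V) : T.V :=
  (T.unique_above x).choose

lemma up_adj (T : HomTree q) (x : T.V) : T.G.Adj x (T.up x) :=
  (T.unique_above x).choose_spec.1.1

lemma lev_up (T : HomTree q) (x : T.V) : T.lev (T.up x) = T.lev x + 1 :=
  (T.unique_above x).choose_spec.1.2

lemma up_unique (T : HomTree q) {x w : T.V} (h : T.G.Adj x w)
    (hl : T.lev w = T.lev x + 1) : w = T.up x :=
  (T.unique_above x).choose_spec.2 w ⟨h, hl⟩

lemma lev_upIter (T : HomTree q) (k : ℕ) (x : T.V) :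
    T.lev (T.up^[k] x) = T.lev x + k := by
  induction k with
  | zero => simp
  | succ n ih =>
    rw [Function.iterate_succ_apply', T.lev_up, ih]
    push_cast; ring

lemma dist_adj (T : HomTree q) {x y : T.V} (h : T.G.Adj x y) :
    T.G.dist x y ≤ 1 := by
  have := SimpleGraph.dist_le h.toWalk
  simpa using this

lemma dist_upIter (T : HomTree q) (k : ℕ) (x : T.V) :
    T.G.dist x (T.up^[k] x) ≤ k := by
  induction k with
  | zero => simp
  | succ n ih =>
    rw [Function.iterate_succ_apply']
    calc T.G.dist x (T.up (T.up^[n] x))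
        ≤ T.G.dist x (T.up^[n] x) + T.G.dist (T.up^[n] x) (T.up (T.up^[n] x)) :=
          T.conn.dist_triangle
      _ ≤ n + 1 := add_le_add ih (T.dist_adj (T.up_adj _))

lemma dist_le_of_iter (T : HomTree q) {k m : ℕ} {x y : T.V}
    (h : T.up^[k] x = T.up^[m] y) : T.G.dist x y ≤ k + m := by
  calc T.G.dist x y ≤ T.G.dist x (T.up^[k] x) + T.G.dist (T.up^[k] x) y :=
        T.conn.dist_triangle
    _ ≤ k + m := by
        refine add_le_add (T.dist_upIter k x) ?_
        rw [h, SimpleGraph.dist_comm]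
        exact T.dist_upIter m y

lemma feas_of_walk (T : HomTree q) {x y : T.V} (p : T.G.Walk x y) :
    ∃ k m : ℕ, k + m ≤ p.length ∧ T.up^[k] x = T.up^[m] y := by
  induction p with
  | nil => exact ⟨0, 0, by simp, rfl⟩
  | @cons u v w h p ih =>
    obtain ⟨k, m, hle, heq⟩ := ih
    rcases T.lev_adj u v h with hl | hl
    · -- v = up u
      have hv : v = T.up u := T.up_unique h hl
      refine ⟨k + 1, m, ?_, ?_⟩
      · simp only [SimpleGraph.Walk.length_cons]; omega
      · rw [Function.iterate_succ_apply, ← hv, heq]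
    · -- u = up v
      have hu : u = T.up v := by
        refine T.up_unique h.symm ?_
        omega
      cases k with
      | zero =>
        refine ⟨0, m + 1, ?_, ?_⟩
        · simp only [SimpleGraph.Walk.length_cons]; omega
        · simp only [Function.iterate_zero_apply] at heq
          rw [Function.iterate_zero_apply, Function.iterate_succ_apply', ← heq, hu]
      | succ k' =>
        refine ⟨k', m, ?_, ?_⟩
        · simp only [SimpleGraph.Walk.length_cons]; omega
        · rw [Function.iterate_succ_apply, ← hu] at heq
          exact heq

lemma dist_feas (T : HomTree q) (x y : T.V) :
    ∃ k m : ℕ, k + m = T.G.dist x y ∧ T.up^[k] x = T.up^[m] y := by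
  obtain ⟨p, hp⟩ := T.conn.exists_walk_length_eq_dist x y
  obtain ⟨k, m, hle, heq⟩ := T.feas_of_walk p
  exact ⟨k, m, le_antisymm (hp ▸ hle) (T.dist_le_of_iter heq), heq⟩

lemma dist_iter_eq (T : HomTree q) {k : ℕ} {x y : T.V}
    (h : T.up^[k] x = y) : T.G.dist x y = k := by
  have hle : T.G.dist x y ≤ k := by
    have : T.up^[k] x = T.up^[0] y := by simpa using h
    simpa using T.dist_le_of_iter this
  obtain ⟨a, b, hab, heq⟩ := T.dist_feas x y
  have h1 : T.lev (T.up^[a] x) = T.lev x + a := T.lev_upIter a x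
  have h2 : T.lev (T.up^[b] y) = T.lev y + b := T.lev_upIter b y
  have h3 : T.lev y = T.lev x + k := by rw [← h]; exact T.lev_upIter k x
  have : (a : ℤ) = k + b := by rw [heq] at h1; omega
  omega

lemma dist_up_right (T : HomTree q) {k : ℕ} {x y : T.V}
    (h : T.up^[k] x = y) : T.G.dist x (T.up y) = k + 1 := by
  apply T.dist_iter_eq
  rw [Function.iterate_succ_apply', h]

lemma dist_up_dichotomy (T : HomTree q) (x y : T.V) :
    T.G.dist x (T.up y) + 1 = T.G.dist x y ∨
      (T.G.dist x (T.up y) = T.G.dist x y + 1 ∧ T.up^[T.G.dist x y] x = y) := by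
  obtain ⟨k, m, hab, heq⟩ := T.dist_feas x y
  cases m with
  | zero =>
    right
    simp only [Function.iterate_zero_apply] at heq
    have hd : T.G.dist x y = k := T.dist_iter_eq heq
    rw [hd]
    exact ⟨T.dist_up_right heq, heq⟩
  | succ m' =>
    left
    have h1 : T.G.dist x (T.up y) ≤ k + m' := by
      apply T.dist_le_of_iter (m := m')
      rw [heq]
      exact Function.iterate_succ_apply T.up m' y
    have h2 : T.G.dist x y ≤ T.G.dist x (T.up y) + 1 := by
      calc T.G.dist x y ≤ T.G.dist x (T.up y) + T.G.dist (T.up y) y :=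
            T.conn.dist_triangle
        _ ≤ T.G.dist x (T.up y) + 1 := by
            refine add_le_add_right ?_ _
            rw [SimpleGraph.dist_comm]
            exact T.dist_adj (T.up_adj y)
    omega

/-- Descendants at depth `k`. -/
def des (T : HomTree q) (k : ℕ) (y : T.V) : Set T.V := {x | T.up^[k] x = y}

/-- Children. -/
def chl (T : HomTree q) (y : T.V) : Set T.V := {x | T.up x = y}

lemma mem_chl_iff (T : HomTree q) {x y : T.V} :
    x ∈ T.chl y ↔ T.G.Adj y x ∧ T.lev x = T.lev y - 1 := by
  constructor
  · rintro (h : T.up x = y)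
    have := T.up_adj x
    have hl := T.lev_up x
    rw [h] at this hl
    exact ⟨this.symm, by omega⟩
  · rintro ⟨h, hl⟩
    have : y = T.up x := T.up_unique h.symm (by omega)
    exact this.symm

lemma neighbor_decomp (T : HomTree q) (y : T.V) :
    T.G.neighborSet y = insert (T.up y) (T.chl y) := by
  ext w
  simp only [SimpleGraph.mem_neighborSet, Set.mem_insert_iff]
  constructor
  · intro h
    rcases T.lev_adj y w h with hl | hl
    · exact Or.inl (T.up_unique h hl)
    · exact Or.inr (T.mem_chl_iff.2 ⟨h, hl⟩)
  · rintro (rfl | h)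
    · exact T.up_adj y
    · exact (T.mem_chl_iff.1 h).1

lemma up_not_mem_chl (T : HomTree q) (y : T.V) : T.up y ∉ T.chl y := by
  intro h
  have := (T.mem_chl_iff.1 h).2
  have := T.lev_up y
  omega

lemma neighbor_finite (T : HomTree q) (y : T.V) : (T.G.neighborSet y).Finite := by
  by_contra h
  have h2 : (T.G.neighborSet y).Infinite := h
  have h3 := h2.ncard
  rw [T.degree y] at h3
  omega

lemma chl_finite (T : HomTree q) (y : T.V) : (T.chl y).Finite :=
  (T.neighbor_finite y).subset (by rw [T.neighbor_decomp y]; exact Set.subset_insert _ _)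

lemma chl_ncard (T : HomTree q) (y : T.V) : (T.chl y).ncard = q := by
  have h := T.degree y
  rw [T.neighbor_decomp y, Set.ncard_insert_of_notMem (T.up_not_mem_chl y) (T.chl_finite y)]
    at h
  omega

lemma mu_finset (T : HomTree q) (s : Finset T.V) :
    T.mu ↑s = ∑ x ∈ s, (q : ℝ≥0∞) ^ (T.lev x) := by
  simp only [mu]
  exact Finset.tsum_subtype' s fun x => (q : ℝ≥0∞) ^ (T.lev x)

lemma mu_finite (T : HomTree q) {A : Set T.V} (hA : A.Finite) :
    T.mu A = ∑ x ∈ hA.toFinset, (q : ℝ≥0∞) ^ (T.lev x) := by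
  rw [← T.mu_finset hA.toFinset, hA.coe_toFinset]

lemma mu_singleton (T : HomTree q) (y : T.V) :
    T.mu {y} = (q : ℝ≥0∞) ^ (T.lev y) := by
  rw [← Finset.coe_singleton, T.mu_finset, Finset.sum_singleton]

variable (hq : 2 ≤ q)

section qfacts

lemma qE_ne_zero (hq : 2 ≤ q) : (q : ℝ≥0∞) ≠ 0 := by
  simp only [ne_eq, Nat.cast_eq_zero]; omega

lemma qE_ne_top : (q : ℝ≥0∞) ≠ ⊤ := ENNReal.natCast_ne_top q

lemma mu_chl (T : HomTree q) (hq : 2 ≤ q) (y : T.V) :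
    T.mu (T.chl y) = (q : ℝ≥0∞) ^ (T.lev y) := by
  rw [T.mu_finite (T.chl_finite y)]
  have hconst : ∀ x ∈ (T.chl_finite y).toFinset,
      (q : ℝ≥0∞) ^ (T.lev x) = (q : ℝ≥0∞) ^ (T.lev y - 1) := by
    intro x hx
    rw [Set.Finite.mem_toFinset] at hx
    rw [(T.mem_chl_iff.1 hx).2]
  rw [Finset.sum_congr rfl hconst, Finset.sum_const]
  have hcard : (T.chl_finite y).toFinset.card = q := by
    rw [← Set.ncard_eq_toFinset_card _ (T.chl_finite y)]
    exact T.chl_ncard y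
  rw [hcard, nsmul_eq_mul]
  calc ((q : ℕ) : ℝ≥0∞) * (q : ℝ≥0∞) ^ (T.lev y - 1)
      = (q : ℝ≥0∞) ^ (1 : ℤ) * (q : ℝ≥0∞) ^ (T.lev y - 1) := by rw [zpow_one]
    _ = (q : ℝ≥0∞) ^ (1 + (T.lev y - 1)) :=
        (ENNReal.zpow_add (qE_ne_zero hq) qE_ne_top 1 (T.lev y - 1)).symm
    _ = (q : ℝ≥0∞) ^ (T.lev y) := by rw [show (1 : ℤ) + (T.lev y - 1) = T.lev y by ring]

end qfacts

lemma des_zero (T : HomTree q) (y : T.V) : T.des 0 y = {y} := by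
  ext x; simp [des]

lemma des_succ (T : HomTree q) (k : ℕ) (y : T.V) :
    T.des (k + 1) y = ⋃ z ∈ T.des k y, T.chl z := by
  ext x
  simp only [des, Set.mem_setOf_eq, Set.mem_iUnion, chl, exists_prop]
  rw [Function.iterate_succ_apply]
  constructor
  · intro h; exact ⟨T.up x, h, rfl⟩
  · rintro ⟨z, hz, rfl⟩; exact hz

lemma des_finite_mu (T : HomTree q) (hq : 2 ≤ q) (k : ℕ) (y : T.V) :
    (T.des k y).Finite ∧ T.mu (T.des k y) = (q : ℝ≥0∞) ^ (T.lev y) := by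
  induction k generalizing y with
  | zero =>
    rw [T.des_zero y]
    exact ⟨Set.finite_singleton y, T.mu_singleton y⟩
  | succ n ih =>
    have hfin : (T.des n y).Finite := (ih y).1
    have hset : T.des (n + 1) y = ⋃ z ∈ hfin.toFinset, T.chl z := by
      rw [T.des_succ n y]
      ext x
      simp [Set.Finite.mem_toFinset]
    constructor
    · rw [hset]
      exact Set.Finite.biUnion hfin.toFinset.finite_toSet fun z _ => T.chl_finite z
    · have hdisj : (↑hfin.toFinset : Set T.V).Pairwise (Function.onFun Disjoint T.chl) := by
        intro a _ b _ hab
        refine Set.disjoint_left.2 ?_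
        rintro x (hx : T.up x = a) (hx' : T.up x = b)
        exact hab (hx ▸ hx' ▸ rfl)
      have hsum := Summable.tsum_finset_bUnion_disjoint (f := fun v => (q : ℝ≥0∞) ^ T.lev v)
        (s := hfin.toFinset) (t := T.chl) hdisj (fun i _ => ENNReal.summable)
      rw [hset]
      simp only [mu]
      rw [hsum]
      have : ∀ z ∈ hfin.toFinset, (∑' x : (T.chl z), (q : ℝ≥0∞) ^ (T.lev x.1))
          = (q : ℝ≥0∞) ^ (T.lev z) := fun z _ => T.mu_chl hq z
      rw [Finset.sum_congr rfl this, ← T.mu_finset, hfin.coe_toFinset]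
      exact (ih y).2

lemma ball_eq (T : HomTree q) (y : T.V) (r : ℕ) :
    T.ball y r = {x | T.G.dist x y ≤ r} := rfl

lemma ball_zero (T : HomTree q) (y : T.V) : T.ball y 0 = {y} := by
  ext x
  rw [ball_eq]
  simp only [Set.mem_setOf_eq, Nat.le_zero, Set.mem_singleton_iff]
  constructor
  · intro h
    obtain ⟨k, m, hab, heq⟩ := T.dist_feas x y
    rw [h] at hab
    have hk : k = 0 := by omega
    have hm : m = 0 := by omega
    rw [hk, hm] at heq
    simpa using heq
  · rintro rfl
    simp [SimpleGraph.dist_self]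

lemma ball_succ (T : HomTree q) (y : T.V) (s : ℕ) :
    T.ball y (s + 1) = T.ball (T.up y) s ∪ (T.des (s + 1) y ∪ T.des s y) := by
  ext x
  rw [ball_eq, ball_eq]
  simp only [Set.mem_setOf_eq, Set.mem_union, des]
  constructor
  · intro h
    rcases T.dist_up_dichotomy x y with hl | ⟨hr, heq⟩
    · left; omega
    · by_cases h1 : T.G.dist x y = s + 1
      · right; left; rw [← h1]; exact heq
      · by_cases h2 : T.G.dist x y = s
        · right; right; rw [← h2]; exact heq
        · left; omega
  · rintro (h | h | h)
    · calc T.G.dist x y ≤ T.G.dist x (T.up y) + T.G.dist (T.up y) y :=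
            T.conn.dist_triangle
        _ ≤ s + 1 := by
            have : T.G.dist (T.up y) y ≤ 1 := by
              rw [SimpleGraph.dist_comm]; exact T.dist_adj (T.up_adj y)
            omega
    · have := T.dist_iter_eq h; omega
    · have := T.dist_iter_eq h; omega

lemma ball_disj1 (T : HomTree q) (y : T.V) (s : ℕ) :
    Disjoint (T.ball (T.up y) s) (T.des (s + 1) y ∪ T.des s y) := by
  refine Set.disjoint_left.2 ?_
  intro x hx hx'
  have hb : T.G.dist x (T.up y) ≤ s := hx
  rcases hx' with h | h
  · have := T.dist_up_right h; omega
  · have := T.dist_up_right h; omega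

lemma ball_disj2 (T : HomTree q) (y : T.V) (s : ℕ) :
    Disjoint (T.des (s + 1) y) (T.des s y) := by
  refine Set.disjoint_left.2 ?_
  rintro x (h : T.up^[s+1] x = y) (h' : T.up^[s] x = y)
  have h1 := T.lev_upIter (s + 1) x
  have h2 := T.lev_upIter s x
  rw [h] at h1
  rw [h'] at h2
  omega

lemma mu_union (T : HomTree q) {A B : Set T.V} (h : Disjoint A B) :
    T.mu (A ∪ B) = T.mu A + T.mu B := by
  simp only [mu]
  exact Summable.tsum_union_disjoint (f := fun v => (q : ℝ≥0∞) ^ T.lev v) h ENNReal.summable ENNReal.summable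

/-- `μ(B_s(y)) = q^{lev y} · cfun q s` where `cfun` satisfies `c 0 = 1`, `c (s+1) = q c s + 2`. -/
def cfun (q : ℕ) : ℕ → ℕ
  | 0 => 1
  | s + 1 => q * cfun q s + 2

lemma ball_finite_mu (T : HomTree q) (hq : 2 ≤ q) (s : ℕ) (y : T.V) :
    (T.ball y s).Finite ∧ T.mu (T.ball y s) = (q : ℝ≥0∞) ^ (T.lev y) * (cfun q s : ℝ≥0∞) := by
  induction s generalizing y with
  | zero =>
    rw [T.ball_zero y]
    refine ⟨Set.finite_singleton y, ?_⟩
    rw [T.mu_singleton y]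
    simp [cfun]
  | succ n ih =>
    have h1 := ih (T.up y)
    have h2 := T.des_finite_mu hq (n + 1) y
    have h3 := T.des_finite_mu hq n y
    rw [T.ball_succ y n]
    constructor
    · exact (h1.1.union (h2.1.union h3.1))
    · rw [T.mu_union (T.ball_disj1 y n), T.mu_union (T.ball_disj2 y n),
        h1.2, h2.2, h3.2, T.lev_up y]
      have hq0 := qE_ne_zero hq
      have hqt : (q : ℝ≥0∞) ≠ ⊤ := qE_ne_top
      rw [show T.lev y + 1 = T.lev y + (1 : ℤ) from rfl,
        ENNReal.zpow_add hq0 hqt (T.lev y) 1, zpow_one]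
      have hc : ((cfun q (n + 1) : ℕ) : ℝ≥0∞) = (q : ℝ≥0∞) * (cfun q n : ℝ≥0∞) + 2 := by
        simp only [cfun]
        push_cast
        ring
      rw [hc]
      ring

lemma cfun_key (q : ℕ) (hq : 2 ≤ q) (s : ℕ) :
    cfun q s * (q - 1) + 2 = q ^ (s + 1) + q ^ s := by
  obtain ⟨d, rfl⟩ : ∃ d, q = d + 1 := ⟨q - 1, by omega⟩
  induction s with
  | zero => simp [cfun]
  | succ n ih =>
    have hstep : cfun (d + 1) (n + 1) * (d + 1 - 1) + 2
        = (d + 1) * (cfun (d + 1) n * (d + 1 - 1) + 2) := by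
      simp only [cfun, Nat.add_sub_cancel]
      ring
    rw [hstep, ih]
    ring

lemma cfun_pos (q : ℕ) (s : ℕ) : 1 ≤ cfun q s := by
  induction s with
  | zero => simp [cfun]
  | succ n ih => simp only [cfun]; omega

lemma cfun_doubling (q : ℕ) (hq : 2 ≤ q) (r : ℕ) :
    q ^ r * cfun q r ≤ cfun q (2 * r) := by
  have h1 := cfun_key q hq r
  have h2 := cfun_key q hq (2 * r)
  have e1 : q ^ r * (q ^ (r + 1) + q ^ r) = q ^ (2 * r + 1) + q ^ (2 * r) := by
    rw [Nat.mul_add, ← pow_add, ← pow_add, show r + (r + 1) = 2 * r + 1 by ring,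
      show r + r = 2 * r by ring]
  have hkey : q ^ r * (cfun q r * (q - 1) + 2) = cfun q (2 * r) * (q - 1) + 2 := by
    rw [h1, e1]
    exact h2.symm
  have hexpand : q ^ r * cfun q r * (q - 1) + 2 * q ^ r = cfun q (2 * r) * (q - 1) + 2 := by
    rw [← hkey]; ring
  have hqr : 1 ≤ q ^ r := Nat.one_le_pow r q (by omega)
  have h4 : q ^ r * cfun q r * (q - 1) + 2 * q ^ r ≤ cfun q (2 * r) * (q - 1) + 2 * q ^ r := by
    rw [hexpand]
    exact add_le_add_right (by omega : (2 : ℕ) ≤ 2 * q ^ r) _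
  have h5 : q ^ r * cfun q r * (q - 1) ≤ cfun q (2 * r) * (q - 1) :=
    Nat.le_of_add_le_add_right h4
  exact Nat.le_of_mul_le_mul_right h5 (by omega)

end HomTree

/-- the space `(V,d,μ)` is not doubling: for any centre `x₀` the ratio
`μ(B_{2r}(x₀))/μ(B_r(x₀))` is at least `q^r` for `r ≥ 1`, and tends to infinity. -/

theorem not_doubling {q : ℕ} (hq : 2 ≤ q) (T : HomTree q) (x₀ : T.V) :
    (∀ r : ℕ, 1 ≤ r →
        (q : ℝ≥0∞) ^ r ≤ T.mu (T.ball x₀ (2 * r)) / T.mu (T.ball x₀ r)) ∧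
      Tendsto (fun r : ℕ => T.mu (T.ball x₀ (2 * r)) / T.mu (T.ball x₀ r))
        atTop (nhds ⊤) := by
  have hW0 : (q : ℝ≥0∞) ^ (T.lev x₀) ≠ 0 :=
    (ENNReal.zpow_pos (qE_ne_zero hq) qE_ne_top _).ne'
  have hWt : (q : ℝ≥0∞) ^ (T.lev x₀) ≠ ⊤ :=
    (ENNReal.zpow_lt_top (qE_ne_zero hq) qE_ne_top _).ne
  have hratio : ∀ r : ℕ, T.mu (T.ball x₀ (2 * r)) / T.mu (T.ball x₀ r)
      = (cfun q (2 * r) : ℝ≥0∞) / (cfun q r : ℝ≥0∞) := by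
    intro r
    rw [(T.ball_finite_mu hq (2 * r) x₀).2, (T.ball_finite_mu hq r x₀).2,
      ENNReal.mul_div_mul_left _ _ hW0 hWt]
  have hge : ∀ r : ℕ, (q : ℝ≥0∞) ^ r ≤ T.mu (T.ball x₀ (2 * r)) / T.mu (T.ball x₀ r) := by
    intro r
    rw [hratio r]
    have hc0 : ((cfun q r : ℕ) : ℝ≥0∞) ≠ 0 := by
      have := cfun_pos q r
      simp only [ne_eq, Nat.cast_eq_zero]
      omega
    have hct : ((cfun q r : ℕ) : ℝ≥0∞) ≠ ⊤ := ENNReal.natCast_ne_top _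
    rw [ENNReal.le_div_iff_mul_le (Or.inl hc0) (Or.inl hct)]
    calc (q : ℝ≥0∞) ^ r * (cfun q r : ℝ≥0∞)
        = ((q ^ r * cfun q r : ℕ) : ℝ≥0∞) := by push_cast; ring
      _ ≤ ((cfun q (2 * r) : ℕ) : ℝ≥0∞) := by
          exact_mod_cast cfun_doubling q hq r
  refine ⟨fun r _ => hge r, ?_⟩
  refine ENNReal.tendsto_nhds_top fun n => ?_
  filter_upwards [Filter.eventually_ge_atTop (n + 1)] with r hr
  have hn : (n : ℝ≥0∞) < (2 : ℝ≥0∞) ^ r := by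
    have h1 : n < 2 ^ r := lt_of_lt_of_le (Nat.lt_two_pow_self (n := n)) (Nat.pow_le_pow_right (by omega) (by omega))
    calc (n : ℝ≥0∞) < ((2 ^ r : ℕ) : ℝ≥0∞) := by exact_mod_cast h1
      _ = (2 : ℝ≥0∞) ^ r := by push_cast; ring
  refine lt_of_lt_of_le hn (le_trans ?_ (hge r))
  exact pow_le_pow_left' (by exact_mod_cast hq) r
end

section
/- The metric measure space (V, d, μ) on the weighted homogeneous tree is locally doubling: for every R > 0 there is a constant C_R = (q^{2R+1}+q^{2R}-2)/(q^{R+1}+q^R-2), independent of center x₀, such that μ(B_{2r}(x₀)) ≤ C_R μ(B_r(x₀)) for all x₀ ∈ V and all 1 ≤ r ≤ R. -/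
open scoped ENNReal NNReal
open MeasureTheory Filter

namespace HomTree

variable {q : ℕ} (T : HomTree q)

noncomputable def par (v : T.V) : T.V := (T.unique_above v).choose

lemma par_adj (v : T.V) : T.G.Adj v (T.par v) := (T.unique_above v).choose_spec.1.1

lemma lev_par (v : T.V) : T.lev (T.par v) = T.lev v + 1 := (T.unique_above v).choose_spec.1.2

lemma eq_par {v w : T.V} (h : T.G.Adj v w) (hl : T.lev w = T.lev v + 1) : w = T.par v :=
  (T.unique_above v).choose_spec.2 w ⟨h, hl⟩

noncomputable def anc (k : ℕ) (v : T.V) : T.V := (T.par)^[k] v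

@[simp] lemma anc_zero (v : T.V) : T.anc 0 v = v := rfl
lemma anc_succ (k : ℕ) (v : T.V) : T.anc (k+1) v = T.anc k (T.par v) :=
  Function.iterate_succ_apply _ _ _
lemma anc_succ' (k : ℕ) (v : T.V) : T.anc (k+1) v = T.par (T.anc k v) :=
  Function.iterate_succ_apply' _ _ _

lemma lev_anc (k : ℕ) (v : T.V) : T.lev (T.anc k v) = T.lev v + k := by
  induction k with
  | zero => simp
  | succ k ih => rw [anc_succ', lev_par, ih]; push_cast; ring

lemma dist_anc_le (k : ℕ) (v : T.V) : T.G.dist v (T.anc k v) ≤ k := by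
  induction k with
  | zero => simp
  | succ k ih =>
    have h1 : T.G.dist (T.anc k v) (T.anc (k+1) v) = 1 := by
      rw [SimpleGraph.dist_eq_one_iff_adj, anc_succ']; exact T.par_adj _
    have := T.conn.dist_triangle (u := v) (v := T.anc k v) (w := T.anc (k+1) v)
    omega

lemma dist_le_of_anc_eq {x y : T.V} {j k : ℕ} (h : T.anc j x = T.anc k y) :
    T.G.dist x y ≤ j + k := by
  have h2 : T.G.dist (T.anc j x) y ≤ k := by
    rw [h, SimpleGraph.dist_comm]; exact T.dist_anc_le k y
  have h1 := T.dist_anc_le j x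
  have := T.conn.dist_triangle (u := x) (v := T.anc j x) (w := y)
  omega

lemma exists_meet (x y : T.V) : ∃ j k : ℕ, j + k = T.G.dist x y ∧ T.anc j x = T.anc k y := by
  generalize hd : T.G.dist x y = n
  induction n using Nat.strong_induction_on generalizing x y with
  | _ n ih =>
  rcases Nat.eq_zero_or_pos n with h0 | hpos
  · subst h0
    have hxy : x = y := (T.conn.dist_eq_zero_iff).1 hd
    exact ⟨0, 0, by simp, by rw [hxy]⟩
  · obtain ⟨p, hp⟩ := T.conn.exists_walk_length_eq_dist x y
    rw [hd] at hp
    cases p with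
    | nil => simp at hp; omega
    | @cons _ v _ hadj p' =>
      simp only [SimpleGraph.Walk.length_cons] at hp
      have hdv : T.G.dist v y = n - 1 := by
        have hle : T.G.dist v y ≤ n - 1 := by
          have := SimpleGraph.dist_le p'; omega
        have := T.conn.dist_triangle (u := x) (v := v) (w := y)
        have hxv : T.G.dist x v = 1 := SimpleGraph.dist_eq_one_iff_adj.2 hadj
        omega
      obtain ⟨j, k, hjk, hanc⟩ := ih (n-1) (by omega) v y hdv
      rcases T.lev_adj x v hadj with hup | hdown
      · have hv : v = T.par x := T.eq_par hadj hup
        refine ⟨j+1, k, by omega, ?_⟩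
        rw [anc_succ, ← hv, hanc]
      · have hx : x = T.par v := T.eq_par hadj.symm (by omega)
        cases j with
        | zero =>
          refine ⟨0, k+1, by omega, ?_⟩
          simp only [anc_zero] at hanc
          rw [anc_zero, anc_succ', ← hanc, ← hx]
        | succ j' =>
          exfalso
          have h2 : T.anc j' x = T.anc k y := by
            rw [hx, ← anc_succ, hanc]
          have := T.dist_le_of_anc_eq h2
          omega

lemma mu_const_level {A : Set T.V} {L : ℤ} (hA : A.Finite) (h : ∀ x ∈ A, T.lev x = L) :
    T.mu A = A.ncard * (q : ℝ≥0∞) ^ L := by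
  have := hA.fintype
  rw [mu, tsum_congr (fun x : A => by rw [h x.1 x.2]), tsum_fintype]
  rw [Finset.sum_const, Finset.card_univ, nsmul_eq_mul, ← Nat.card_eq_fintype_card, Nat.card_coe_set_eq]

lemma nbr_finite (w : T.V) : (T.G.neighborSet w).Finite := by
  by_contra h
  have h0 : (T.G.neighborSet w).ncard = 0 := Set.Infinite.ncard h
  have := T.degree w
  omega

lemma fiber_eq (w : T.V) : {x | T.par x = w} = {x | T.G.Adj w x ∧ T.lev x = T.lev w - 1} := by
  ext x
  constructor
  · rintro rfl
    exact ⟨(T.par_adj x).symm, by have := T.lev_par x; omega⟩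
  · rintro ⟨hadj, hl⟩
    exact (T.eq_par hadj.symm (by omega)).symm

lemma fiber_ncard (w : T.V) : ({x | T.par x = w} : Set T.V).ncard = q := by
  rw [fiber_eq]
  have hsub : {x | T.G.Adj w x ∧ T.lev x = T.lev w - 1} ⊆ T.G.neighborSet w :=
    fun x hx => hx.1
  have hfin : ({x | T.G.Adj w x ∧ T.lev x = T.lev w - 1} : Set T.V).Finite :=
    (T.nbr_finite w).subset hsub
  have hunion : T.G.neighborSet w = {x | T.G.Adj w x ∧ T.lev x = T.lev w - 1} ∪ {T.par w} := by
    ext x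
    constructor
    · intro hx
      rcases T.lev_adj w x hx with hup | hdown
      · exact Or.inr (T.eq_par hx hup)
      · exact Or.inl ⟨hx, hdown⟩
    · rintro (⟨hadj, _⟩ | rfl)
      · exact hadj
      · exact T.par_adj w
  have hdisj : Disjoint {x | T.G.Adj w x ∧ T.lev x = T.lev w - 1} ({T.par w} : Set T.V) := by
    rw [Set.disjoint_singleton_right]
    intro hmem
    have h1 := hmem.2
    have h2 := T.lev_par w
    omega
  have hcard := T.degree w
  rw [hunion, Set.ncard_union_eq hdisj hfin (Set.finite_singleton _)] at hcard
  simp only [Set.ncard_singleton] at hcard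
  omega

lemma mu_fiber (hq : 2 ≤ q) (w : T.V) :
    T.mu {x | T.par x = w} = (q : ℝ≥0∞) ^ (T.lev w) := by
  have hq0 : (q : ℝ≥0∞) ≠ 0 := by
    simp only [ne_eq, Nat.cast_eq_zero]; omega
  have hqt : (q : ℝ≥0∞) ≠ ⊤ := ENNReal.natCast_ne_top q
  have hfin : ({x | T.par x = w} : Set T.V).Finite := by
    rw [fiber_eq]; exact (T.nbr_finite w).subset (fun x hx => hx.1)
  rw [T.mu_const_level (L := T.lev w - 1) hfin (fun x hx => by
    have hx' : T.par x = w := hx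
    have hl := T.lev_par x
    rw [hx'] at hl
    omega), fiber_ncard]
  rw [show T.lev w = (T.lev w - 1) + 1 by ring, ENNReal.zpow_add hq0 hqt, zpow_one]
  ring

lemma mu_par_preimage (hq : 2 ≤ q) (S : Set T.V) : T.mu (T.par ⁻¹' S) = T.mu S := by
  set f : T.V → ℝ≥0∞ := fun x => (q : ℝ≥0∞) ^ (T.lev x) with hf
  have hfib : ∀ w, ∑' x : {x | T.par x = w}, f x.1 = f w := fun w => T.mu_fiber hq w
  show ∑' x : (T.par ⁻¹' S), f x.1 = ∑' w : S, f w.1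
  rw [tsum_subtype (T.par ⁻¹' S) f, tsum_subtype S f,
    ← ENNReal.tsum_fiberwise (Set.indicator (T.par ⁻¹' S) f) T.par]
  refine tsum_congr fun w => ?_
  by_cases hw : w ∈ S
  · rw [Set.indicator_of_mem hw, ← hfib w]
    refine tsum_congr fun x => ?_
    have hx : x.1 ∈ T.par ⁻¹' S := by
      have : T.par x.1 = w := x.2
      simp [Set.mem_preimage, this, hw]
    rw [Set.indicator_of_mem hx]
  · rw [Set.indicator_of_notMem hw]
    have hz : ∀ x : ↥(T.par ⁻¹' {w}), Set.indicator (T.par ⁻¹' S) f x.1 = 0 := by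
      rintro ⟨x, hx⟩
      have hcx : T.par x = w := hx
      exact Set.indicator_of_notMem (by simp [Set.mem_preimage, hcx, hw]) f
    rw [tsum_congr hz, tsum_zero]

lemma mu_anc_fiber (hq : 2 ≤ q) (k : ℕ) (v : T.V) :
    T.mu {x | T.anc k x = v} = (q : ℝ≥0∞) ^ (T.lev v) := by
  induction k generalizing v with
  | zero =>
    have h0 : {x | T.anc 0 x = v} = ({v} : Set T.V) := by
      ext x; simp [anc_zero]
    rw [h0, mu]
    exact tsum_singleton v (fun y => (q : ℝ≥0∞) ^ T.lev y)
  | succ k ih =>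
    have hset : {x | T.anc (k+1) x = v} = T.par ⁻¹' {y | T.anc k y = v} := by
      ext x; simp [Set.mem_preimage, anc_succ]
    rw [hset, T.mu_par_preimage hq, ih]

end HomTree


namespace HomTree

variable {q : ℕ} (T : HomTree q)

/-- Descendants of the `j`-th ancestor of `x₀` at depth `k`. -/
def Kst (x₀ : T.V) (j k : ℕ) : Set T.V := {x | T.anc k x = T.anc j x₀}

/-- The piece of the sphere with confluence parameter `j` and depth `k`. -/
def Sph (x₀ : T.V) (j k : ℕ) : Set T.V :=
  if j = 0 then T.Kst x₀ 0 k else T.Kst x₀ j k \ T.Kst x₀ (j-1) (k-1)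

lemma lev_mem_Kst {x₀ : T.V} {j k : ℕ} {x : T.V} (h : x ∈ T.Kst x₀ j k) :
    T.lev x + k = T.lev x₀ + j := by
  have h1 := T.lev_anc k x
  have h2 := T.lev_anc j x₀
  have h3 : T.anc k x = T.anc j x₀ := h
  rw [h3, h2] at h1
  omega

lemma Kst_mono (x₀ : T.V) (j k : ℕ) : T.Kst x₀ j k ⊆ T.Kst x₀ (j+1) (k+1) := by
  intro x hx
  have hx' : T.anc k x = T.anc j x₀ := hx
  show T.anc (k+1) x = T.anc (j+1) x₀
  rw [anc_succ', anc_succ', hx']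

lemma Kst_chain (x₀ : T.V) (j k m : ℕ) : T.Kst x₀ j k ⊆ T.Kst x₀ (j+m) (k+m) := by
  induction m with
  | zero => exact subset_rfl
  | succ m ih => exact ih.trans (T.Kst_mono x₀ (j+m) (k+m))

lemma Sph_subset_Kst (x₀ : T.V) (j k : ℕ) : T.Sph x₀ j k ⊆ T.Kst x₀ j k := by
  unfold Sph
  split
  · next h => subst h; exact subset_rfl
  · exact Set.diff_subset

/-- Index set for the partition of the ball of radius `t`. -/
def idxF (t : ℕ) : Finset ((_ : ℕ) × ℕ) :=
  (Finset.range (t+1)).sigma (fun j => Finset.range (t+1-j))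

lemma ball_eq_biUnion (x₀ : T.V) (t : ℕ) :
    T.ball x₀ t = ⋃ p ∈ idxF t, T.Sph x₀ p.1 p.2 := by
  ext x
  simp only [Set.mem_iUnion, ball, dist, Set.mem_setOf_eq]
  constructor
  · intro hx
    obtain ⟨j₀, k₀, hsum, heq⟩ := T.exists_meet x x₀
    have hP : ∃ jj, ∃ kk, T.anc kk x = T.anc jj x₀ := ⟨k₀, j₀, heq⟩
    classical
    set j := Nat.find hP with hj
    obtain ⟨k, hk⟩ := Nat.find_spec hP
    have hjle : j ≤ k₀ := Nat.find_min' hP ⟨j₀, heq⟩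
    have hl1 : T.lev x + k = T.lev x₀ + j := by
      have h1 := T.lev_anc k x
      have h2 := T.lev_anc j x₀
      rw [hk, h2] at h1; omega
    have hl2 : T.lev x + j₀ = T.lev x₀ + k₀ := by
      have h1 := T.lev_anc j₀ x
      have h2 := T.lev_anc k₀ x₀
      rw [heq, h2] at h1; omega
    have hjk : j + k ≤ t := by omega
    refine ⟨⟨j, k⟩, ?_, ?_⟩
    · simp only [idxF, Finset.mem_sigma, Finset.mem_range]; omega
    · show x ∈ T.Sph x₀ j k
      unfold Sph
      split
      · next h0 => show T.anc k x = T.anc 0 x₀; rw [← h0]; exact hk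
      · next h0 =>
        refine ⟨hk, fun hmem => ?_⟩
        have hmem' : T.anc (k-1) x = T.anc (j-1) x₀ := hmem
        exact Nat.find_min hP (show j - 1 < j by omega) ⟨k-1, hmem'⟩
  · rintro ⟨⟨j, k⟩, hpmem, hx⟩
    simp only [idxF, Finset.mem_sigma, Finset.mem_range] at hpmem
    have hx' : T.anc k x = T.anc j x₀ := T.Sph_subset_Kst x₀ j k hx
    have := T.dist_le_of_anc_eq hx'
    omega

lemma Sph_disj_aux (x₀ : T.V) {j k j' k' : ℕ} (hlt : j < j') (x : T.V)
    (hx : x ∈ T.Sph x₀ j k) (hx' : x ∈ T.Sph x₀ j' k') : False := by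
  have h1 : x ∈ T.Kst x₀ j k := T.Sph_subset_Kst x₀ j k hx
  have h2 : x ∈ T.Kst x₀ j' k' := T.Sph_subset_Kst x₀ j' k' hx'
  have hl1 := T.lev_mem_Kst h1
  have hl2 := T.lev_mem_Kst h2
  have hkk : k' = k + (j' - j) := by omega
  have hchain : x ∈ T.Kst x₀ (j'-1) (k'-1) := by
    have := T.Kst_chain x₀ j k (j' - 1 - j) h1
    have hj : j + (j' - 1 - j) = j' - 1 := by omega
    have hk : k + (j' - 1 - j) = k' - 1 := by omega
    rwa [hj, hk] at this
  have : x ∉ T.Kst x₀ (j'-1) (k'-1) := by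
    have hj0 : ¬ (j' = 0) := by omega
    unfold Sph at hx'
    rw [if_neg hj0] at hx'
    exact hx'.2
  exact this hchain

lemma Sph_pairwise (x₀ : T.V) (t : ℕ) :
    (↑(idxF t) : Set ((_ : ℕ) × ℕ)).Pairwise
      (Function.onFun Disjoint fun p : (_ : ℕ) × ℕ => T.Sph x₀ p.1 p.2) := by
  rintro ⟨j, k⟩ - ⟨j', k'⟩ - hne
  show Disjoint (T.Sph x₀ j k) (T.Sph x₀ j' k')
  rw [Set.disjoint_left]
  intro x hx hx'
  rcases lt_trichotomy j j' with h | h | h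
  · exact T.Sph_disj_aux x₀ h x hx hx'
  · subst h
    have hl1 := T.lev_mem_Kst (T.Sph_subset_Kst x₀ j k hx)
    have hl2 := T.lev_mem_Kst (T.Sph_subset_Kst x₀ j k' hx')
    have : k = k' := by omega
    exact hne (by rw [this])
  · exact T.Sph_disj_aux x₀ h x hx' hx

end HomTree


namespace HomTree

/-- Weight of a sphere piece, divided by `q^{ℓ(x₀)}`. -/
def wAux (q j k : ℕ) : ℕ := if j = 0 then 1 else if k = 0 then q^j else q^j - q^(j-1)

/-- Measure of the ball of radius `t`, divided by `q^{ℓ(x₀)}`. -/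
def cAux (q t : ℕ) : ℕ := (∑ i ∈ Finset.range (t+1), q^i) + ∑ i ∈ Finset.range t, q^i

lemma wAux_ge_one (q : ℕ) {j k k' : ℕ} (hk : 1 ≤ k) (hk' : 1 ≤ k') :
    wAux q j k = wAux q j k' := by
  unfold wAux
  rcases Nat.eq_zero_or_pos j with hj | hj
  · simp [hj]
  · rw [if_neg (by omega), if_neg (by omega), if_neg (by omega), if_neg (by omega)]

lemma wAux_diag (q : ℕ) (hq : 1 ≤ q) (t : ℕ) :
    ∑ j ∈ Finset.range (t+1), wAux q j (t+1-j) = q^t := by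
  induction t with
  | zero => simp [wAux]
  | succ t ih =>
    rw [Finset.sum_range_succ]
    have hcong : ∀ j ∈ Finset.range (t+1), wAux q j (t+2-j) = wAux q j (t+1-j) := by
      intro j hj
      rw [Finset.mem_range] at hj
      exact wAux_ge_one q (by omega) (by omega)
    rw [Finset.sum_congr rfl hcong, ih]
    have h1 : t + 1 + 1 - (t+1) = 1 := by omega
    rw [h1]
    have h2 : wAux q (t+1) 1 = q^(t+1) - q^t := by simp [wAux]
    have h3 : q^t ≤ q^(t+1) := Nat.pow_le_pow_right hq (by omega)
    omega

lemma cAux_succ (q t : ℕ) : cAux q (t+1) = cAux q t + (q^(t+1) + q^t) := by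
  unfold cAux
  rw [Finset.sum_range_succ (n := t+1), Finset.sum_range_succ (n := t)]
  ring

lemma wAux_sum' (q : ℕ) (hq : 1 ≤ q) (t : ℕ) :
    ∑ j ∈ Finset.range (t+1), ∑ k ∈ Finset.range (t+1-j), wAux q j k = cAux q t := by
  induction t with
  | zero => simp [wAux, cAux]
  | succ t ih =>
    rw [Finset.sum_range_succ]
    have h1 : t + 1 + 1 - (t+1) = 1 := by omega
    have hterm : ∑ k ∈ Finset.range (t+1+1-(t+1)), wAux q (t+1) k = q^(t+1) := by
      rw [h1, Finset.sum_range_one]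
      simp [wAux]
    have hcong : ∀ j ∈ Finset.range (t+1),
        ∑ k ∈ Finset.range (t+2-j), wAux q j k
          = (∑ k ∈ Finset.range (t+1-j), wAux q j k) + wAux q j (t+1-j) := by
      intro j hj
      rw [Finset.mem_range] at hj
      have : t + 2 - j = (t+1-j) + 1 := by omega
      rw [this, Finset.sum_range_succ]
    rw [Finset.sum_congr rfl hcong, Finset.sum_add_distrib, ih, wAux_diag q hq t, hterm,
      cAux_succ]
    ring

lemma wAux_sum (q : ℕ) (hq : 1 ≤ q) (t : ℕ) :
    ∑ p ∈ idxF t, wAux q p.1 p.2 = cAux q t := by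
  rw [idxF, Finset.sum_sigma]
  exact wAux_sum' q hq t

lemma cAux_int (q t : ℕ) : ((q:ℤ) - 1) * (cAux q t : ℤ) = (q:ℤ)^(t+1) + (q:ℤ)^t - 2 := by
  induction t with
  | zero => simp [cAux]; ring
  | succ t ih =>
    have h := cAux_succ q t
    have hcast : (cAux q (t+1) : ℤ) = (cAux q t : ℤ) + ((q:ℤ)^(t+1) + (q:ℤ)^t) := by
      rw [h]; push_cast; ring
    rw [hcast]
    linear_combination ih

variable {q : ℕ} (T : HomTree q)

lemma mu_Kst (hq : 2 ≤ q) (x₀ : T.V) (j k : ℕ) :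
    T.mu (T.Kst x₀ j k) = (q:ℝ≥0∞) ^ (T.lev x₀ + (j:ℤ)) := by
  have h := T.mu_anc_fiber hq k (T.anc j x₀)
  rw [T.lev_anc] at h
  exact h

lemma zpow_add_nat (hq : 2 ≤ q) (L : ℤ) (m : ℕ) :
    (q:ℝ≥0∞) ^ (L + (m:ℤ)) = ((q^m : ℕ) : ℝ≥0∞) * (q:ℝ≥0∞) ^ L := by
  have hq0 : (q : ℝ≥0∞) ≠ 0 := by simp only [ne_eq, Nat.cast_eq_zero]; omega
  have hqt : (q : ℝ≥0∞) ≠ ⊤ := ENNReal.natCast_ne_top q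
  rw [ENNReal.zpow_add hq0 hqt, mul_comm]
  congr 1
  rw [zpow_natCast]
  push_cast
  rfl

lemma mu_Sph (hq : 2 ≤ q) (x₀ : T.V) (j k : ℕ) :
    T.mu (T.Sph x₀ j k) = (wAux q j k : ℝ≥0∞) * (q:ℝ≥0∞) ^ (T.lev x₀) := by
  by_cases hj : j = 0
  · subst hj
    have h0 : T.Sph x₀ 0 k = T.Kst x₀ 0 k := by unfold Sph; simp
    rw [h0, T.mu_Kst hq, wAux]
    simp
  · by_cases hk : k = 0
    · subst hk
      have hdisj : T.Sph x₀ j 0 = T.Kst x₀ j 0 := by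
        unfold Sph
        rw [if_neg hj]
        ext x
        constructor
        · rintro ⟨hx, -⟩; exact hx
        · intro hx
          refine ⟨hx, fun hx2 => ?_⟩
          have h1 := T.lev_mem_Kst hx
          have h2 := T.lev_mem_Kst hx2
          omega
      rw [hdisj, T.mu_Kst hq, zpow_add_nat hq, wAux, if_neg hj]
      simp
    · -- main case : j ≥ 1, k ≥ 1
      have hsub : T.Kst x₀ (j-1) (k-1) ⊆ T.Kst x₀ j k := by
        have h := T.Kst_mono x₀ (j-1) (k-1)
        have hj' : j - 1 + 1 = j := by omega
        have hk' : k - 1 + 1 = k := by omega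
        rwa [hj', hk'] at h
      have hSph : T.Sph x₀ j k = T.Kst x₀ j k \ T.Kst x₀ (j-1) (k-1) := by
        unfold Sph; rw [if_neg hj]
      have hadd : T.mu (T.Sph x₀ j k) + T.mu (T.Kst x₀ (j-1) (k-1)) = T.mu (T.Kst x₀ j k) := by
        rw [hSph]
        unfold mu
        rw [← Summable.tsum_union_disjoint (f := fun v : T.V => (q:ℝ≥0∞) ^ T.lev v)
          Set.disjoint_sdiff_left ENNReal.summable ENNReal.summable,
          Set.diff_union_of_subset hsub]
      have hpow : q^(j-1) ≤ q^j := Nat.pow_le_pow_right (by omega) (by omega)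
      have hrhs : (wAux q j k : ℝ≥0∞) * (q:ℝ≥0∞) ^ (T.lev x₀) + T.mu (T.Kst x₀ (j-1) (k-1))
          = T.mu (T.Kst x₀ j k) := by
        rw [T.mu_Kst hq, T.mu_Kst hq, zpow_add_nat hq, zpow_add_nat hq, ← add_mul,
          wAux, if_neg hj, if_neg hk, ← Nat.cast_add]
        congr 2
        omega
      have hfin : T.mu (T.Kst x₀ (j-1) (k-1)) ≠ ⊤ := by
        rw [T.mu_Kst hq, zpow_add_nat hq]
        have hq0 : (q : ℝ≥0∞) ≠ 0 := by simp only [ne_eq, Nat.cast_eq_zero]; omega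
        have hqt : (q : ℝ≥0∞) ≠ ⊤ := ENNReal.natCast_ne_top q
        exact ENNReal.mul_ne_top (ENNReal.natCast_ne_top _) (ENNReal.zpow_lt_top hq0 hqt _).ne
      rw [← hrhs] at hadd
      exact (ENNReal.add_left_inj hfin).mp hadd

lemma mu_ball_eq (hq : 2 ≤ q) (x₀ : T.V) (t : ℕ) :
    T.mu (T.ball x₀ t) = (cAux q t : ℝ≥0∞) * (q:ℝ≥0∞) ^ (T.lev x₀) := by
  rw [T.ball_eq_biUnion x₀ t]
  have hstep : T.mu (⋃ p ∈ idxF t, T.Sph x₀ p.1 p.2)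
      = ∑ p ∈ idxF t, T.mu (T.Sph x₀ p.1 p.2) := by
    unfold mu
    exact Summable.tsum_finset_bUnion_disjoint (f := fun v : T.V => (q:ℝ≥0∞) ^ T.lev v)
      (T.Sph_pairwise x₀ t) (fun i _ => ENNReal.summable)
  rw [hstep, Finset.sum_congr rfl (fun p _ => T.mu_Sph hq x₀ p.1 p.2), ← Finset.sum_mul,
    ← Nat.cast_sum, wAux_sum q (by omega) t]

end HomTree

open HomTree

/-- the space `(V,d,μ)` is locally doubling: for every `R ≥ 1` the constant
`C_R = (q^{2R+1}+q^{2R}-2)/(q^{R+1}+q^R-2)`, independent of the centre, satisfies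
`μ(B_{2r}(x₀)) ≤ C_R μ(B_r(x₀))` for all `x₀` and all `1 ≤ r ≤ R`. -/
theorem locally_doubling {q : ℕ} (hq : 2 ≤ q) (T : HomTree q) (R : ℕ) (hR : 1 ≤ R)
    (x₀ : T.V) (r : ℕ) (hr1 : 1 ≤ r) (hrR : r ≤ R) :
    T.mu (T.ball x₀ (2 * r)) ≤
      (((q : ℝ≥0∞) ^ (2 * R + 1) + (q : ℝ≥0∞) ^ (2 * R) - 2) /
        ((q : ℝ≥0∞) ^ (R + 1) + (q : ℝ≥0∞) ^ R - 2)) * T.mu (T.ball x₀ r) := by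
  have h2X : 2 ≤ q^(2*R+1) + q^(2*R) := by
    have h1 : 1 ≤ q^(2*R+1) := Nat.one_le_pow _ _ (by omega)
    have h2 : 1 ≤ q^(2*R) := Nat.one_le_pow _ _ (by omega)
    omega
  have h2Y : 2 ≤ q^(R+1) + q^R := by
    have h1 : 1 ≤ q^(R+1) := Nat.one_le_pow _ _ (by omega)
    have h2 : 1 ≤ q^R := Nat.one_le_pow _ _ (by omega)
    omega
  have hXcast : ((q : ℝ≥0∞) ^ (2*R+1) + (q : ℝ≥0∞) ^ (2*R) - 2)
      = ((q^(2*R+1) + q^(2*R) - 2 : ℕ) : ℝ≥0∞) := by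
    rw [ENNReal.natCast_sub]
    push_cast
    rfl
  have hYcast : ((q : ℝ≥0∞) ^ (R+1) + (q : ℝ≥0∞) ^ R - 2)
      = ((q^(R+1) + q^R - 2 : ℕ) : ℝ≥0∞) := by
    rw [ENNReal.natCast_sub]
    push_cast
    rfl
  rw [T.mu_ball_eq hq x₀ (2*r), T.mu_ball_eq hq x₀ r, hXcast, hYcast]
  set NX := q^(2*R+1) + q^(2*R) - 2 with hNXdef
  set NY := q^(R+1) + q^R - 2 with hNYdef
  -- the scalar inequality
  have hnat : cAux q (2*r) * NY ≤ NX * cAux q r := by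
    rw [hNXdef, hNYdef]
    zify [h2X, h2Y]
    have hc2r := cAux_int q (2*r)
    have hcr := cAux_int q r
    have hq2 : (2:ℤ) ≤ (q:ℤ) := by exact_mod_cast hq
    have epow : ∀ m : ℕ, (q:ℤ)^(2*m) = ((q:ℤ)^m)^2 := fun m => by
      rw [mul_comm 2 m, pow_mul]
    have hA2 : (2:ℤ) ≤ (q:ℤ)^r :=
      le_trans hq2 (by simpa using pow_le_pow_right₀ (by linarith : (1:ℤ) ≤ (q:ℤ)) hr1)
    have hAB : (q:ℤ)^r ≤ (q:ℤ)^R := pow_le_pow_right₀ (by linarith) hrR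
    rw [pow_succ (q:ℤ) (2*r), epow r] at hc2r
    rw [pow_succ (q:ℤ) r] at hcr
    rw [pow_succ (q:ℤ) (2*R), pow_succ (q:ℤ) R, epow R]
    set A := (q:ℤ)^r with hA
    set B := (q:ℤ)^R with hB
    -- hc2r : ((q:ℤ)-1) * (cAux q (2*r)) = A^2 * q + A^2 - 2
    -- hcr  : ((q:ℤ)-1) * (cAux q r) = A * q + A - 2
    -- goal : ↑(cAux q (2*r)) * (B * q + B - 2) ≤ (B^2 * q + B^2 - 2) * ↑(cAux q r)
    have hkey : (0:ℤ) ≤ ((q:ℤ)+1) * (B-A) * (((q:ℤ)+1)*A*B - 2*A - 2*B + 2) := by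
      have h1 : (0:ℤ) ≤ B - A := by linarith
      have hB2 : (2:ℤ) ≤ B := le_trans hA2 hAB
      have hprod : (1:ℤ) * 1 ≤ (A-1)*(B-1) :=
        mul_le_mul (by linarith) (by linarith) (by linarith) (by linarith)
      have h2 : (0:ℤ) ≤ ((q:ℤ)+1)*A*B - 2*A - 2*B + 2 := by
        nlinarith [hprod, mul_nonneg (mul_nonneg (by linarith : (0:ℤ) ≤ (q:ℤ)-2)
          (by linarith : (0:ℤ) ≤ A)) (by linarith : (0:ℤ) ≤ B)]
      exact mul_nonneg (mul_nonneg (by linarith) h1) h2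
    have hq1 : (0:ℤ) < (q:ℤ) - 1 := by linarith
    rw [← mul_le_mul_iff_left₀ hq1]
    have eL : (cAux q (2*r) : ℤ) * (B*q + B - 2) * ((q:ℤ)-1)
        = (A^2*q + A^2 - 2) * (B*q + B - 2) := by linear_combination (B*q + B - 2) * hc2r
    have eR : (B^2*q + B^2 - 2) * (cAux q r : ℤ) * ((q:ℤ)-1)
        = (B^2*q + B^2 - 2) * (A*q + A - 2) := by linear_combination (B^2*q + B^2 - 2) * hcr
    have emid : (A^2*q + A^2 - 2) * (B*q + B - 2) ≤ (B^2*q + B^2 - 2) * (A*q + A - 2) := by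
      nlinarith [hkey]
    linarith [eL, eR, emid]
  have hNY0 : (NY : ℝ≥0∞) ≠ 0 := by
    rw [Nat.cast_ne_zero, hNYdef]
    have h1 : 2 ≤ q^(R+1) := by
      calc 2 ≤ q := hq
        _ = q^1 := (pow_one q).symm
        _ ≤ q^(R+1) := Nat.pow_le_pow_right (by omega) (by omega)
    have h2 : 1 ≤ q^R := Nat.one_le_pow _ _ (by omega)
    exact Nat.sub_ne_zero_of_lt (by linarith)
  have hNYt : (NY : ℝ≥0∞) ≠ ⊤ := ENNReal.natCast_ne_top _
  have main : (cAux q (2*r) : ℝ≥0∞) ≤ (NX : ℝ≥0∞) / (NY : ℝ≥0∞) * (cAux q r : ℝ≥0∞) := by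
    have hform : (NX : ℝ≥0∞) / (NY:ℝ≥0∞) * (cAux q r : ℝ≥0∞)
        = ((NX : ℝ≥0∞) * (cAux q r : ℝ≥0∞)) / (NY : ℝ≥0∞) := by
      rw [div_eq_mul_inv, div_eq_mul_inv, mul_right_comm]
    rw [hform, ENNReal.le_div_iff_mul_le (Or.inl hNY0) (Or.inl hNYt),
      ← Nat.cast_mul, ← Nat.cast_mul, Nat.cast_le]
    exact hnat
  calc (cAux q (2*r) : ℝ≥0∞) * (q:ℝ≥0∞) ^ (T.lev x₀)
      ≤ ((NX : ℝ≥0∞) / (NY : ℝ≥0∞) * (cAux q r : ℝ≥0∞)) * (q:ℝ≥0∞) ^ (T.lev x₀) :=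
        mul_le_mul_left main _
    _ = (NX : ℝ≥0∞) / (NY : ℝ≥0∞) * ((cAux q r : ℝ≥0∞) * (q:ℝ≥0∞) ^ (T.lev x₀)) := by
        ring
end
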